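/- In the Knapsack-to-CMRV reduction, the induced map μ ↦ x[μ] is a bijection between feasible matchings of the CMRV instance and feasible solutions of the Knapsack instance, up to the matching of the f̄-families being determined by the f-families. -/
import Mathlib


/-- A matching is feasible if each location `j` hosts exactly `q j` families. -/
def feasible {F L : Type} [Fintype F] [DecidableEq L] (q : L → ℕ) (μ : F → L) : Prop :=
  ∀ j : L, (Finset.univ.filter (fun i => μ i = j)).card = q j

/-- The government objective: expected number of successfully integrated families. -/
def z {F L : Type} [Fintype F] (π : F → L → ℝ) (μ : F → L) : ℝ :=
  ∑ i, π i (μ i)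

/-- Families of the reduction: `inl i` is `fᵢ`, `inr i` is `f̄ᵢ`. -/
abbrev Fam (n : ℕ) := Fin n ⊕ Fin n

/-- Locations of the reduction: `inl j` is `ℓⱼ`, `inr j` is `ℓ̄ⱼ`. -/
abbrev Loc (n : ℕ) := Fin n ⊕ Fin n

/-- Employment probabilities of the constructed CMRV instance. -/
noncomputable def piR (n : ℕ) (a : Fin n → ℝ) : Fam n → Loc n → ℝ
  | Sum.inl i, Sum.inl j => if i = j then 1 / (4 * n) else 0
  | Sum.inl i, Sum.inr j => if i = j then a i + 1 / (4 * n) else 0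
  | Sum.inr i, Sum.inl j => if i = j then 1 / (4 * n) else 0
  | Sum.inr i, Sum.inr j => if i = j then 1 / (4 * n) else 0

/-- The lower bound `γ = (2n+1)/(4n) − b` of the constructed CMRV instance. -/
noncomputable def gam (n : ℕ) (b : ℝ) : ℝ := (2 * n + 1) / (4 * n) - b

/-- The induced Knapsack solution: `x[μ]ᵢ = 1` iff `μ(fᵢ) = ℓᵢ` (as a real indicator). -/
noncomputable def xInd {n : ℕ} (μ : Fam n → Loc n) (i : Fin n) : ℝ :=
  if μ (Sum.inl i) = Sum.inl i then 1 else 0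

/-- Ranks of the constructed preference orders: `fᵢ` ranks `ℓⱼ` at position `j` and `ℓ̄ⱼ`
at position `n + j`; `f̄ᵢ` is symmetric. -/
def rankR (n : ℕ) : Fam n → Loc n → ℕ
  | Sum.inl _, Sum.inl j => (j : ℕ) + 1
  | Sum.inl _, Sum.inr j => n + (j : ℕ) + 1
  | Sum.inr _, Sum.inl j => n + (j : ℕ) + 1
  | Sum.inr _, Sum.inr j => (j : ℕ) + 1

/-- The rank value function of the reduction: `v(k) = w_k / 2` for `1 ≤ k ≤ n`, else `0`. -/
noncomputable def vR (n : ℕ) (w : Fin n → ℝ) (k : ℕ) : ℝ :=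
  if h : 1 ≤ k ∧ k ≤ n then w ⟨k - 1, by omega⟩ / 2 else 0

/-- The matching induced by a Knapsack solution `x`: pairs `fᵢ` with `ℓᵢ` and `f̄ᵢ` with
`ℓ̄ᵢ` when `xᵢ = 1`, and `fᵢ` with `ℓ̄ᵢ`, `f̄ᵢ` with `ℓᵢ` when `xᵢ = 0`. -/
def fromX {n : ℕ} (x : Fin n → Bool) : Fam n → Loc n
  | Sum.inl i => if x i then Sum.inl i else Sum.inr i
  | Sum.inr i => if x i then Sum.inr i else Sum.inl i

/-- The induced Knapsack solution as a Boolean vector. -/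
def xB {n : ℕ} (μ : Fam n → Loc n) (i : Fin n) : Bool :=
  decide (μ (Sum.inl i) = Sum.inl i)

/-- In the Knapsack-to-CMRV reduction, `μ ↦ x[μ]` is a bijection between
feasible matchings of the CMRV instance and feasible Knapsack solutions (the matching of
the `f̄`-families being determined by the `f`-families), with inverse `fromX`. -/
theorem reduction_bijection
    (n : ℕ) (hn : 0 < n) (a : Fin n → ℝ) (b : ℝ)
    (ha : ∀ i, 0 ≤ a i) (hsum : ∑ i, a i = 1 / (4 * n))
    (hb0 : 0 ≤ b) (hb : b < 1 / (4 * n)) :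
    (∀ x : Fin n → Bool,
      (∑ i, a i * (if x i then (1:ℝ) else 0)) ≤ b →
        feasible (fun _ => 1) (fromX x) ∧
        gam n b ≤ z (piR n a) (fromX x) ∧
        xB (fromX x) = x) ∧
    (∀ μ : Fam n → Loc n, feasible (fun _ => 1) μ → gam n b ≤ z (piR n a) μ →
      fromX (xB μ) = μ) := by
  have hn' : (0:ℝ) < (n:ℝ) := by exact_mod_cast hn
  have hQ : (0:ℝ) < 1 / (4 * (n:ℝ)) := by positivity
  constructor
  · -- Part 1
    intro x hx
    refine ⟨?_, ?_, ?_⟩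
    · -- feasibility
      intro j
      have hinv : ∀ c : Fam n, fromX x (fromX x c) = c := by
        intro c
        rcases c with i | i <;> by_cases h : x i <;> simp [fromX, h]
      rw [Finset.card_eq_one]
      refine ⟨fromX x j, ?_⟩
      ext c
      simp only [Finset.mem_filter, Finset.mem_univ, true_and, Finset.mem_singleton]
      constructor
      · intro h; rw [← h, hinv]
      · intro h; rw [h, hinv]
    · -- objective bound
      have h1 : ∀ i : Fin n, piR n a (Sum.inl i) (fromX x (Sum.inl i)) =
          a i + 1 / (4 * n) - a i * (if x i then (1:ℝ) else 0) := by
        intro i; by_cases h : x i <;> simp [fromX, piR, h]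
      have h2 : ∀ i : Fin n, piR n a (Sum.inr i) (fromX x (Sum.inr i)) = 1 / (4 * n) := by
        intro i; by_cases h : x i <;> simp [fromX, piR, h]
      have hz : z (piR n a) (fromX x) =
          1 / (4 * n) + (n:ℝ) * (1 / (4 * n)) + (n:ℝ) * (1 / (4 * n)) -
            ∑ i, a i * (if x i then (1:ℝ) else 0) := by
        rw [z, Fintype.sum_sum_type]
        rw [Finset.sum_congr rfl (fun i _ => h1 i), Finset.sum_congr rfl (fun i _ => h2 i)]
        rw [Finset.sum_sub_distrib, Finset.sum_add_distrib, hsum, Finset.sum_const,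
          Finset.card_univ, Fintype.card_fin, nsmul_eq_mul]
        ring
      have h4 : (2 * (n:ℝ) + 1) / (4 * n) =
          1 / (4 * n) + (n:ℝ) * (1 / (4 * n)) + (n:ℝ) * (1 / (4 * n)) := by
        field_simp; ring
      rw [gam, hz]
      push_cast
      linarith [h4, hx]
    · -- xB ∘ fromX = id
      funext i
      by_cases h : x i <;> simp [xB, fromX, h]
  · -- Part 2
    intro μ hfeas hz
    set M : Fam n → ℝ := Sum.elim (fun i => a i + 1 / (4 * n)) (fun _ => 1 / (4 * n)) with hM
    have hMle : ∀ c : Fam n, piR n a c (μ c) ≤ M c := by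
      intro c
      rcases c with i | i
      · rcases h : μ (Sum.inl i) with j | j <;> simp only [piR, hM, Sum.elim_inl] <;>
          split_ifs <;> linarith [ha i, hQ.le]
      · rcases h : μ (Sum.inr i) with j | j <;> simp only [piR, hM, Sum.elim_inr] <;>
          split_ifs <;> linarith [hQ.le]
    have hQleM : ∀ c : Fam n, 1 / (4 * (n:ℝ)) ≤ M c := by
      intro c; rcases c with i | i <;> simp [hM] <;> linarith [ha i]
    have hMsum : ∑ c, M c =
        1 / (4 * n) + (n:ℝ) * (1 / (4 * n)) + (n:ℝ) * (1 / (4 * n)) := by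
      rw [Fintype.sum_sum_type]
      simp only [hM, Sum.elim_inl, Sum.elim_inr]
      rw [Finset.sum_add_distrib, hsum]
      simp only [Finset.sum_const, Finset.card_univ, Fintype.card_fin, nsmul_eq_mul]
    have hnonzero : ∀ c : Fam n, piR n a c (μ c) ≠ 0 := by
      intro c hc0
      have h1 : z (piR n a) μ = ∑ d ∈ Finset.univ.erase c, piR n a d (μ d) := by
        rw [z, ← Finset.add_sum_erase _ _ (Finset.mem_univ c), hc0, zero_add]
      have h2 : ∑ d ∈ Finset.univ.erase c, piR n a d (μ d) ≤
          ∑ d ∈ Finset.univ.erase c, M d :=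
        Finset.sum_le_sum (fun d _ => hMle d)
      have h3 : M c + ∑ d ∈ Finset.univ.erase c, M d = ∑ c, M c :=
        Finset.add_sum_erase _ M (Finset.mem_univ c)
      have h4 : (2 * (n:ℝ) + 1) / (4 * n) =
          1 / (4 * n) + (n:ℝ) * (1 / (4 * n)) + (n:ℝ) * (1 / (4 * n)) := by
        field_simp; ring
      have hgam : gam n b = (2 * (n:ℝ) + 1) / (4 * n) - b := rfl
      have hQc := hQleM c
      rw [hgam, h1] at hz
      linarith [hz, h2, h3, hMsum, h4, hb]
    have keyL : ∀ i : Fin n,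
        μ (Sum.inl i) = Sum.inl i ∨ μ (Sum.inl i) = Sum.inr i := by
      intro i
      have h := hnonzero (Sum.inl i)
      rcases hm : μ (Sum.inl i) with j | j <;> rw [hm] at h
      · have hij : i = j := by by_contra hne; simp [piR, hne] at h
        subst hij; exact Or.inl rfl
      · have hij : i = j := by by_contra hne; simp [piR, hne] at h
        subst hij; exact Or.inr rfl
    have keyR : ∀ i : Fin n,
        μ (Sum.inr i) = Sum.inl i ∨ μ (Sum.inr i) = Sum.inr i := by
      intro i
      have h := hnonzero (Sum.inr i)
      rcases hm : μ (Sum.inr i) with j | j <;> rw [hm] at h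
      · have hij : i = j := by by_contra hne; simp [piR, hne] at h
        subst hij; exact Or.inl rfl
      · have hij : i = j := by by_contra hne; simp [piR, hne] at h
        subst hij; exact Or.inr rfl
    have comp : ∀ i : Fin n,
        (μ (Sum.inl i) = Sum.inl i → μ (Sum.inr i) = Sum.inr i) ∧
        (μ (Sum.inl i) = Sum.inr i → μ (Sum.inr i) = Sum.inl i) := by
      intro i
      constructor
      · intro h1
        rcases keyR i with h2 | h2
        · exfalso
          have hcard : (Finset.univ.filter fun c => μ c = Sum.inl i).card = 1 := hfeas (Sum.inl i)
          have hsub : ({Sum.inl i, Sum.inr i} : Finset (Fam n)) ⊆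
              Finset.univ.filter (fun c => μ c = Sum.inl i) := by
            intro c hc
            simp only [Finset.mem_insert, Finset.mem_singleton] at hc
            rcases hc with rfl | rfl <;> simp [h1, h2]
          have hle := Finset.card_le_card hsub
          have h2' : ({Sum.inl i, Sum.inr i} : Finset (Fam n)).card = 2 := by
            rw [Finset.card_insert_of_notMem (by simp), Finset.card_singleton]
          omega
        · exact h2
      · intro h1
        rcases keyR i with h2 | h2
        · exact h2
        · exfalso
          have hcard : (Finset.univ.filter fun c => μ c = Sum.inr i).card = 1 := hfeas (Sum.inr i)
          have hsub : ({Sum.inl i, Sum.inr i} : Finset (Fam n)) ⊆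
              Finset.univ.filter (fun c => μ c = Sum.inr i) := by
            intro c hc
            simp only [Finset.mem_insert, Finset.mem_singleton] at hc
            rcases hc with rfl | rfl <;> simp [h1, h2]
          have hle := Finset.card_le_card hsub
          have h2' : ({Sum.inl i, Sum.inr i} : Finset (Fam n)).card = 2 := by
            rw [Finset.card_insert_of_notMem (by simp), Finset.card_singleton]
          omega
    funext c
    rcases c with i | i
    · by_cases h : μ (Sum.inl i) = Sum.inl i
      · simp [fromX, xB, h]
      · have h' : μ (Sum.inl i) = Sum.inr i := (keyL i).resolve_left h
        simp [fromX, xB, h, h']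
    · by_cases h : μ (Sum.inl i) = Sum.inl i
      · have h2 := (comp i).1 h
        simp [fromX, xB, h, h2]
      · have h' : μ (Sum.inl i) = Sum.inr i := (keyL i).resolve_left h
        have h2 := (comp i).2 h'
        simp [fromX, xB, h, h2]
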